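/- Let 𝒜 be a commutative regular Banach function algebra on its Gelfand spectrum Δ(𝒜), and let I be a closed ideal of 𝒜 such that the hull Z(I) is a set of spectral synthesis. Let x ∈ Δ(𝒜) \ Z(I) be a point evaluation character φ_x. Then the restriction of φ_x to I belongs to UCB(I); in fact φ_x|_I = u·(φ_x|_I) for some u ∈ I with u(x) = 1. -/

import Mathlib

open NormedSpace

/-- Multiplication by `v ∈ A` as a continuous linear map on a closed ideal `I`. -/
noncomputable def mulByCLM {A : Type*} [NormedCommRing A] [NormedAlgebra ℂ A]
    (I : Submodule ℂ A) (hI : ∀ (v x : A), x ∈ I → x * v ∈ I) (v : A) : I →L[ℂ] I :=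
  { toFun := fun w => ⟨(w : A) * v, hI v w w.2⟩
    map_add' := fun x y => by ext; simp [add_mul]
    map_smul' := fun c x => by ext; simp [smul_mul_assoc]
    cont := (continuous_subtype_val.mul continuous_const).subtype_mk _ }

/-- The module action of `A` on `I*`: `⟨v·T, w⟩ = ⟨T, w * v⟩`. -/
noncomputable def idealAct {A : Type*} [NormedCommRing A] [NormedAlgebra ℂ A]
    (I : Submodule ℂ A) (hI : ∀ (v x : A), x ∈ I → x * v ∈ I) (v : A)
    (T : StrongDual ℂ I) : StrongDual ℂ I :=
  T.comp (mulByCLM I hI v)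

/-- `UCB(I)`: the norm-closed span of `{v·T : v ∈ A, T ∈ I*}`. -/
noncomputable def UCBideal {A : Type*} [NormedCommRing A] [NormedAlgebra ℂ A]
    (I : Submodule ℂ A) (hI : ∀ (v x : A), x ∈ I → x * v ∈ I) : Set (StrongDual ℂ I) :=
  closure (Submodule.span ℂ
    {S : StrongDual ℂ I | ∃ (v : A) (T : StrongDual ℂ I), S = idealAct I hI v T} : Set (StrongDual ℂ I))

theorem isClosed_setOf_forall_mem_eq_zero {α Ω β : Type*} [TopologicalSpace Ω]
    [TopologicalSpace β] [T1Space β] [Zero β] (f : α → Ω → β) (hf : ∀ a, Continuous (f a))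
    (S : Set α) : IsClosed {x | ∀ a ∈ S, f a x = 0} := by
  simp only [Set.ofPred_forall]
  exact isClosed_biInter fun a _ => isClosed_singleton.preimage (hf a)

theorem idealAct_mem_UCBideal {A : Type*} [NormedCommRing A] [NormedAlgebra ℂ A]
    (I : Submodule ℂ A) (hI : ∀ (v x : A), x ∈ I → x * v ∈ I) (v : A) (T : StrongDual ℂ I) :
    idealAct I hI v T ∈ UCBideal I hI :=
  subset_closure (Submodule.subset_span ⟨v, T, rfl⟩)

theorem idealAct_comp_subtypeL_of_map_mul {A : Type*} [NormedCommRing A] [NormedAlgebra ℂ A]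
    (I : Submodule ℂ A) (hI : ∀ (v x : A), x ∈ I → x * v ∈ I) (φ : StrongDual ℂ A)
    (hφ : ∀ a b, φ (a * b) = φ a * φ b) {u : A} (hu : φ u = 1) :
    idealAct I hI u (φ.comp I.subtypeL) = φ.comp I.subtypeL := by
  ext w
  change φ ((w : A) * u) = φ w
  rw [hφ, hu, mul_one]

theorem eval_restriction_mem_UCB_general
    {A : Type*} [NormedCommRing A] [NormedAlgebra ℂ A]
    {Ω : Type*} [TopologicalSpace Ω]
    (ev : A →ₐ[ℂ] (Ω → ℂ)) (hcont : ∀ u : A, Continuous (ev u))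
    (I : Submodule ℂ A) (hI : ∀ (v x : A), x ∈ I → x * v ∈ I)
    (hreg : ∀ E : Set Ω, IsClosed E → ∀ x ∉ E, ∃ u : A,
      HasCompactSupport (ev u) ∧ (∀ y ∈ E, ev u y = 0) ∧ ev u x = 1)
    (hsyn : ∀ u : A, (∀ x : Ω, (∀ w ∈ I, ev w x = 0) → ev u x = 0) → u ∈ I)
    (x₀ : Ω) (hx₀ : ¬ ∀ u ∈ I, ev u x₀ = 0)
    (φ : StrongDual ℂ A) (hφ : ∀ u : A, φ u = ev u x₀) :
    φ.comp I.subtypeL ∈ UCBideal I hI ∧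
      ∃ u : A, u ∈ I ∧ ev u x₀ = 1 ∧
        φ.comp I.subtypeL = idealAct I hI u (φ.comp I.subtypeL) := by
  obtain ⟨u, -, hu_hull, hu_x₀⟩ :=
    hreg _ (isClosed_setOf_forall_mem_eq_zero ev hcont I) x₀ hx₀
  have hu_mem : u ∈ I := hsyn u hu_hull
  have hφ_mul : ∀ a b, φ (a * b) = φ a * φ b := fun a b => by
    simp only [hφ, map_mul, Pi.mul_apply]
  have h_fixed : φ.comp I.subtypeL = idealAct I hI u (φ.comp I.subtypeL) :=
    (idealAct_comp_subtypeL_of_map_mul I hI φ hφ_mul (by rw [hφ, hu_x₀])).symm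
  exact ⟨h_fixed ▸ idealAct_mem_UCBideal I hI u _, u, hu_mem, hu_x₀, h_fixed⟩

/-- let `A` be a regular commutative Banach algebra of functions on `Ω` (its
Gelfand spectrum), `I` a closed ideal whose hull `Z(I)` is a set of spectral synthesis
(so `I(Z(I)) ⊆ I`), and `x₀ ∉ Z(I)` a point with continuous evaluation functional `φ`.
Then `φ|_I ∈ UCB(I)`; in fact `φ|_I = u·(φ|_I)` for some `u ∈ I` with `u(x₀) = 1`. -/
theorem eval_restriction_mem_UCB
    {A : Type*} [NormedCommRing A] [NormedAlgebra ℂ A] [CompleteSpace A]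
    {Ω : Type*} [TopologicalSpace Ω]
    (ev : A →ₐ[ℂ] (Ω → ℂ)) (hcont : ∀ u : A, Continuous (ev u))
    (I : Submodule ℂ A) (hI : ∀ (v x : A), x ∈ I → x * v ∈ I)
    (hIclosed : IsClosed (I : Set A))
    (hreg : ∀ E : Set Ω, IsClosed E → ∀ x ∉ E, ∃ u : A,
      HasCompactSupport (ev u) ∧ (∀ y ∈ E, ev u y = 0) ∧ ev u x = 1)
    (hsyn : ∀ u : A, (∀ x : Ω, (∀ w ∈ I, ev w x = 0) → ev u x = 0) → u ∈ I)
    (x₀ : Ω) (hx₀ : ¬ ∀ u ∈ I, ev u x₀ = 0)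
    (φ : StrongDual ℂ A) (hφ : ∀ u : A, φ u = ev u x₀) :
    φ.comp I.subtypeL ∈ UCBideal I hI ∧
      ∃ u : A, u ∈ I ∧ ev u x₀ = 1 ∧
        φ.comp I.subtypeL = idealAct I hI u (φ.comp I.subtypeL) :=
  eval_restriction_mem_UCB_general ev hcont I hI hreg hsyn x₀ hx₀ φ hφ
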